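/- Let m(t) = e^{−it}·cosh(sin t)·sinh(sin t) = (1/2) e^{−it} sinh(2 sin t) for real t. Then the signed area of the closed curve m over one period 2π, namely (1/2)∫_0^{2π} Im( conj(m(t)) m'(t) ) dt, equals −(π/8)·(I₀(4) − 1), where I₀ is the modified Bessel function of the first kind of order 0. -/

import Mathlib

/-!
Write `m(t) = e^{-it} f(t)` with `f(t) = sinh(2 sin t)/2` real. Then `conj(m) m' = f f' - i f²`,
so the integrand of the signed area is `-f² = (1 - cosh(4 sin t))/8`. Shifting `t` by `±π/2`
turns `e^{±4 sin t}` into `e^{4 cos t}`, so `∫_0^{2π} cosh(4 sin t) dt = 2π I₀(4)`.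
-/

open Complex Real intervalIntegral

/-- The modified Bessel function of the first kind of order `0`,
`I₀(x) = (1/(2π)) ∫_0^{2π} e^{x cos θ} dθ`. -/
noncomputable def besselI₀ (x : ℝ) : ℝ :=
  (1 / (2 * π)) * ∫ θ in (0:ℝ)..2 * π, Real.exp (x * Real.cos θ)

theorem Function.Periodic.intervalIntegral_comp_add_right {E : Type*} [NormedAddCommGroup E]
    [NormedSpace ℝ E] {f : ℝ → E} {T : ℝ} (hf : Function.Periodic f T) (c : ℝ) :
    ∫ x in (0:ℝ)..T, f (x + c) = ∫ x in (0:ℝ)..T, f x := by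
  rw [integral_comp_add_right, zero_add, add_comm T c, hf.intervalIntegral_add_eq c 0, zero_add]

theorem integral_exp_mul_cos_add (x c : ℝ) :
    ∫ t in (0:ℝ)..2 * π, Real.exp (x * Real.cos (t + c)) = 2 * π * besselI₀ x := by
  have hper : Function.Periodic (fun t => Real.exp (x * Real.cos t)) (2 * π) := fun t => by
    simp only [Real.cos_add_two_pi]
  rw [hper.intervalIntegral_comp_add_right c, besselI₀]
  field_simp

theorem integral_cosh_mul_sin (x : ℝ) :
    ∫ t in (0:ℝ)..2 * π, Real.cosh (x * Real.sin t) = 2 * π * besselI₀ x := by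
  have hcos_add (c : ℝ) : Continuous fun t => Real.exp (x * Real.cos (t + c)) := by fun_prop
  have hcosh (t : ℝ) : Real.cosh (x * Real.sin t) =
      (Real.exp (x * Real.cos (t + -(π / 2))) + Real.exp (x * Real.cos (t + π / 2))) / 2 := by
    rw [Real.cosh_eq, ← sub_eq_add_neg, Real.cos_sub_pi_div_two, Real.cos_add_pi_div_two]
    ring_nf
  simp only [hcosh, integral_div]
  rw [integral_add ((hcos_add _).intervalIntegrable _ _) ((hcos_add _).intervalIntegrable _ _),
    integral_exp_mul_cos_add, integral_exp_mul_cos_add]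
  ring

theorem im_conj_mul_deriv_exp_neg_I_mul_ofReal {f : ℝ → ℝ} {t : ℝ}
    (hf : DifferentiableAt ℝ f t) :
    ((starRingEnd ℂ) (Complex.exp (-Complex.I * t) * f t) *
        deriv (fun s : ℝ => Complex.exp (-Complex.I * s) * f s) t).im = -f t ^ 2 := by
  have hrot : HasDerivAt (fun s : ℝ => Complex.exp (-Complex.I * s))
      (Complex.exp (-Complex.I * t) * -Complex.I) t :=
    ((hasDerivAt_id (t : ℂ)).const_mul (-Complex.I)).cexp.comp_ofReal.congr_deriv (by simp)
  have hderiv : HasDerivAt (fun s : ℝ => Complex.exp (-Complex.I * s) * f s)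
      (Complex.exp (-Complex.I * t) * -Complex.I * f t +
        Complex.exp (-Complex.I * t) * ((deriv f t : ℝ) : ℂ)) t :=
    hrot.mul hf.hasDerivAt.ofReal_comp
  rw [hderiv.deriv]
  have hunit :
      (starRingEnd ℂ) (Complex.exp (-Complex.I * t)) * Complex.exp (-Complex.I * t) = 1 := by
    rw [← Complex.exp_conj, ← Complex.exp_add, map_mul, map_neg, Complex.conj_I,
      Complex.conj_ofReal]
    simp
  have hexpand : (starRingEnd ℂ) (Complex.exp (-Complex.I * t) * f t) *
      (Complex.exp (-Complex.I * t) * -Complex.I * f t +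
        Complex.exp (-Complex.I * t) * ((deriv f t : ℝ) : ℂ)) =
      (f t * deriv f t : ℝ) + (-f t ^ 2 : ℝ) * Complex.I := by
    rw [map_mul, Complex.conj_ofReal]
    push_cast
    linear_combination (f t * ((deriv f t : ℝ) : ℂ) - f t ^ 2 * Complex.I) * hunit
  rw [hexpand, Complex.add_im, Complex.ofReal_im, Complex.im_ofReal_mul, Complex.I_im, mul_one,
    zero_add]

theorem signed_area_of_m_bessel
    (m : ℝ → ℂ)
    (hm : ∀ t : ℝ, m t = (1/2) * Complex.exp (-Complex.I * t)
        * Complex.sinh (2 * Complex.sin t)) :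
    (1/2) * (∫ t in (0:ℝ)..2 * π, ((starRingEnd ℂ) (m t) * deriv m t).im) =
      -(π / 8) * (besselI₀ 4 - 1) := by
  set f : ℝ → ℝ := fun t => Real.sinh (2 * Real.sin t) / 2
  have hm_eq : m = fun t : ℝ => Complex.exp (-Complex.I * t) * f t := by
    ext t
    rw [hm]
    push_cast [f]
    ring
  have hintegrand (t : ℝ) : ((starRingEnd ℂ) (m t) * deriv m t).im =
      (1 - Real.cosh (4 * Real.sin t)) / 8 := by
    rw [hm_eq, im_conj_mul_deriv_exp_neg_I_mul_ofReal (by fun_prop),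
      show (4 : ℝ) * Real.sin t = 2 * (2 * Real.sin t) by ring, Real.cosh_two_mul, Real.cosh_sq]
    ring
  simp only [hintegrand, integral_div]
  rw [integral_sub intervalIntegrable_const ((by fun_prop : Continuous fun t =>
      Real.cosh (4 * Real.sin t)).intervalIntegrable _ _), integral_const, integral_cosh_mul_sin]
  simp only [smul_eq_mul]
  ring
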